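/- There exists a constant C > 0 such that for all 0 < v < u and all y, z ∈ ℝ, ∫_ℝ |G(u,x,y) − G(v,x,z)| dx ≤ C·(v^{−1/2}·(u−v)^{1/2} + v^{−1/4}·|y−z|^{1/2}). -/

import Mathlib

open MeasureTheory Real

/-- The Gaussian heat kernel `G(t,x,y) = (2πt)^{-1/2} exp(-(x-y)²/(2t))` for `t > 0`,
and `0` for `t ≤ 0`. -/
noncomputable def heatKernel (t x y : ℝ) : ℝ :=
  if 0 < t then (1 / Real.sqrt (2 * Real.pi * t)) * Real.exp (-(x - y) ^ 2 / (2 * t)) else 0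

/-! Splitting at `G(v,·,y)`, each of the two L¹ distances is at most the total mass `2`, and,
by the fundamental theorem of calculus and Tonelli, at most `(u - v) / v` resp. `|y - z| / √v`:
the time and space derivatives of `G(t,·,y)` have L¹ norm at most `1 / t` resp. `1 / √t`,
because the second moment `∫ (x - y)² G(t,x,y) dx` is `t`. Finally `min 2 a ≤ √(2 a)`. -/

open ProbabilityTheory Set

theorem integral_abs_sub_le_of_hasDerivAt {α : Type*} [MeasurableSpace α] {μ : Measure α}
    [SFinite μ] {f f' : ℝ → α → ℝ} {a b M : ℝ} (hab : a ≤ b)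
    (hM : 0 ≤ M) (hf : ∀ x, ∀ s ∈ Icc a b, HasDerivAt (f · x) (f' s x) s)
    (hf'cont : ∀ x, ContinuousOn (f' · x) (Icc a b))
    (hf'meas : Measurable (Function.uncurry f'))
    (hf'bound : ∀ s ∈ Ioc a b, ∫⁻ x, ‖f' s x‖ₑ ∂μ ≤ ENNReal.ofReal M) :
    ∫ x, |f b x - f a x| ∂μ ≤ M * (b - a) := by
  have hftc : ∀ x, f b x - f a x = ∫ s in Ioc a b, f' s x := fun x => by
    rw [← intervalIntegral.integral_of_le hab]
    refine (intervalIntegral.integral_eq_sub_of_hasDerivAt (fun s hs => hf x s ?_)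
      ((hf'cont x).intervalIntegrable_of_Icc hab)).symm
    rwa [uIcc_of_le hab] at hs
  have hmeas : AEStronglyMeasurable (fun x => |f b x - f a x|) μ := by
    simp_rw [hftc]
    exact hf'meas.stronglyMeasurable.integral_prod_left.aestronglyMeasurable.norm
  rw [integral_eq_lintegral_of_nonneg_ae (ae_of_all _ fun x => abs_nonneg _) hmeas]
  refine ENNReal.toReal_le_of_le_ofReal (mul_nonneg hM (sub_nonneg.2 hab)) ?_
  calc ∫⁻ x, ENNReal.ofReal |f b x - f a x| ∂μ
      ≤ ∫⁻ x, (∫⁻ s in Ioc a b, ‖f' s x‖ₑ) ∂μ := lintegral_mono fun x => by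
        rw [hftc, ← Real.enorm_eq_ofReal_abs]
        exact enorm_integral_le_lintegral_enorm _
    _ = ∫⁻ s in Ioc a b, ∫⁻ x, ‖f' s x‖ₑ ∂μ :=
        lintegral_lintegral_swap (hf'meas.enorm.comp measurable_swap).aemeasurable
    _ ≤ ∫⁻ _ in Ioc a b, ENNReal.ofReal M := setLIntegral_mono measurable_const hf'bound
    _ = ENNReal.ofReal (M * (b - a)) := by
        rw [setLIntegral_const, Real.volume_Ioc, ← ENNReal.ofReal_mul hM]

theorem integral_norm_sub_le_add {α E : Type*} [MeasurableSpace α] [NormedAddCommGroup E]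
    {μ : Measure α} {f g h : α → E} (hf : Integrable f μ) (hg : Integrable g μ)
    (hh : Integrable h μ) :
    ∫ x, ‖f x - h x‖ ∂μ ≤ (∫ x, ‖f x - g x‖ ∂μ) + ∫ x, ‖g x - h x‖ ∂μ :=
  (integral_mono (hf.sub hh).norm ((hf.sub hg).norm.add (hg.sub hh).norm)
    fun _ => norm_sub_le_norm_sub_add_norm_sub _ _ _).trans_eq
    (integral_add (hf.sub hg).norm (hg.sub hh).norm)

theorem min_le_sqrt_mul {a b : ℝ} (ha : 0 ≤ a) (hb : 0 ≤ b) : min a b ≤ √(a * b) :=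
  le_sqrt_of_sq_le (by nlinarith [min_le_left a b, min_le_right a b, le_min ha hb])

theorem heatKernel_of_pos {t : ℝ} (ht : 0 < t) (x y : ℝ) :
    heatKernel t x y = (√(2 * π * t))⁻¹ * exp (-(x - y) ^ 2 / (2 * t)) := by
  rw [heatKernel, if_pos ht, one_div]

theorem heatKernel_eq_gaussianPDFReal {t : ℝ} (ht : 0 < t) (x y : ℝ) :
    heatKernel t x y = gaussianPDFReal y t.toNNReal x := by
  rw [heatKernel_of_pos ht, gaussianPDFReal, Real.coe_toNNReal _ ht.le]

@[fun_prop]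
theorem Measurable.heatKernel {α : Type*} [MeasurableSpace α] {t x y : α → ℝ}
    (ht : Measurable t) (hx : Measurable x) (hy : Measurable y) :
    Measurable fun a => heatKernel (t a) (x a) (y a) :=
  Measurable.ite (measurableSet_lt measurable_const ht) (by fun_prop) measurable_const

theorem heatKernel_nonneg (t x y : ℝ) : 0 ≤ heatKernel t x y := by
  unfold heatKernel; split_ifs <;> positivity

section

variable {t : ℝ}

theorem integrable_heatKernel (ht : 0 < t) (y : ℝ) : Integrable (heatKernel t · y) := by
  simp_rw [heatKernel_eq_gaussianPDFReal ht]; exact integrable_gaussianPDFReal _ _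

theorem integral_heatKernel (ht : 0 < t) (y : ℝ) : ∫ x, heatKernel t x y = 1 := by
  simp_rw [heatKernel_eq_gaussianPDFReal ht]
  exact integral_gaussianPDFReal_eq_one _ (by simpa using ht)

theorem integral_sq_mul_heatKernel (ht : 0 < t) (y : ℝ) :
    ∫ x, (x - y) ^ 2 * heatKernel t x y = t := by
  have hvar := variance_fun_id_gaussianReal (μ := y) (v := t.toNNReal)
  rw [variance_eq_integral measurable_id'.aemeasurable, integral_id_gaussianReal,
    integral_gaussianReal_eq_integral_smul (by simpa using ht), Real.coe_toNNReal _ ht.le] at hvar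
  simp_rw [heatKernel_eq_gaussianPDFReal ht, mul_comm _ (gaussianPDFReal _ _ _)]
  exact hvar

theorem integrable_sq_mul_heatKernel (ht : 0 < t) (y : ℝ) :
    Integrable fun x => (x - y) ^ 2 * heatKernel t x y :=
  .of_integral_ne_zero (by rw [integral_sq_mul_heatKernel ht]; exact ht.ne')

theorem hasDerivAt_heatKernel_time (ht : 0 < t) (x y : ℝ) :
    HasDerivAt (heatKernel · x y)
      (((x - y) ^ 2 / (2 * t ^ 2) - 1 / (2 * t)) * heatKernel t x y) t := by
  have hexp : ∀ s, 0 < s →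
      heatKernel s x y = exp (-(log (2 * π * s) / 2) - (x - y) ^ 2 / (2 * s)) := fun s hs => by
    rw [heatKernel_of_pos hs, sqrt_eq_rpow, rpow_def_of_pos (by positivity), ← exp_neg,
      ← exp_add]
    ring_nf
  have hφ : HasDerivAt (fun s => -(log (2 * π * s) / 2) - (x - y) ^ 2 / (2 * s))
      ((x - y) ^ 2 / (2 * t ^ 2) - 1 / (2 * t)) t := by
    have := ((((hasDerivAt_id t).const_mul (2 * π)).log (by positivity)).div_const 2).fun_neg
      |>.fun_sub ((hasDerivAt_inv ht.ne').const_mul ((x - y) ^ 2 / 2))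
    refine (this.congr_deriv (by simp only [id]; field_simp; ring)).congr_of_eventuallyEq
      (.of_forall fun s => ?_)
    simp only [id]; ring
  have hev : (heatKernel · x y) =ᶠ[nhds t] _ :=
    (eventually_gt_nhds ht).mono fun s hs => hexp s hs
  rw [hexp t ht, mul_comm]
  exact hφ.exp.congr_of_eventuallyEq hev

theorem hasDerivAt_heatKernel_space (ht : 0 < t) (x w : ℝ) :
    HasDerivAt (heatKernel t x ·) ((x - w) / t * heatKernel t x w) w := by
  have hG : (heatKernel t x ·) = fun w => (√(2 * π * t))⁻¹ * exp (-(x - w) ^ 2 / (2 * t)) :=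
    funext (heatKernel_of_pos ht x)
  have := ((((hasDerivAt_id w).const_sub x).fun_pow 2).fun_neg.div_const (2 * t)).exp.const_mul
    (√(2 * π * t))⁻¹
  rw [hG]
  refine this.congr_deriv ?_
  simp only [id, heatKernel_of_pos ht]
  field_simp
  ring

theorem lintegral_enorm_le_of_abs_le_heatKernel_moments (ht : 0 < t) {φ : ℝ → ℝ} {α β y : ℝ}
    (hφ : ∀ x, |φ x| ≤ α * ((x - y) ^ 2 * heatKernel t x y) + β * heatKernel t x y) :
    ∫⁻ x, ‖φ x‖ₑ ≤ ENNReal.ofReal (α * t + β) := by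
  have hint : Integrable fun x => α * ((x - y) ^ 2 * heatKernel t x y) + β * heatKernel t x y :=
    ((integrable_sq_mul_heatKernel ht y).const_mul α).add
      ((integrable_heatKernel ht y).const_mul β)
  calc ∫⁻ x, ‖φ x‖ₑ
      ≤ ∫⁻ x, ENNReal.ofReal
          (α * ((x - y) ^ 2 * heatKernel t x y) + β * heatKernel t x y) :=
        lintegral_mono fun x => by
          rw [Real.enorm_eq_ofReal_abs]; exact ENNReal.ofReal_le_ofReal (hφ x)
    _ = ENNReal.ofReal (α * t + β) := by
        rw [← ofReal_integral_eq_lintegral_ofReal hint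
          (ae_of_all _ fun x => (abs_nonneg _).trans (hφ x)), integral_add, integral_const_mul,
          integral_const_mul, integral_sq_mul_heatKernel ht, integral_heatKernel ht, mul_one]
        exacts [(integrable_sq_mul_heatKernel ht y).const_mul α,
          (integrable_heatKernel ht y).const_mul β]

theorem lintegral_enorm_deriv_heatKernel_time_le (ht : 0 < t) (y : ℝ) :
    ∫⁻ x, ‖((x - y) ^ 2 / (2 * t ^ 2) - 1 / (2 * t)) * heatKernel t x y‖ₑ ≤
      ENNReal.ofReal (1 / t) := by
  have h := lintegral_enorm_le_of_abs_le_heatKernel_moments ht (α := 1 / (2 * t ^ 2))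
    (β := 1 / (2 * t))
    (φ := fun x => ((x - y) ^ 2 / (2 * t ^ 2) - 1 / (2 * t)) * heatKernel t x y) fun x => by
      rw [abs_mul, abs_of_nonneg (heatKernel_nonneg t x y)]
      have : |(x - y) ^ 2 / (2 * t ^ 2) - 1 / (2 * t)| ≤
          (x - y) ^ 2 / (2 * t ^ 2) + 1 / (2 * t) := by
        refine (abs_sub _ _).trans_eq ?_
        rw [abs_of_nonneg (by positivity), abs_of_nonneg (by positivity)]
      exact (mul_le_mul_of_nonneg_right this (heatKernel_nonneg t x y)).trans_eq (by ring)
  convert h using 2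
  field_simp
  ring

theorem lintegral_enorm_deriv_heatKernel_space_le (ht : 0 < t) (w : ℝ) :
    ∫⁻ x, ‖(x - w) / t * heatKernel t x w‖ₑ ≤ ENNReal.ofReal (1 / √t) := by
  have hst : 0 < √t := sqrt_pos.2 ht
  have h := lintegral_enorm_le_of_abs_le_heatKernel_moments ht (α := 1 / (2 * t * √t))
    (β := 1 / (2 * √t)) (y := w) (φ := fun x => (x - w) / t * heatKernel t x w) fun x => by
      rw [abs_mul, abs_of_nonneg (heatKernel_nonneg t x w), abs_div, abs_of_pos ht]
      have hamgm : 2 * √t * |x - w| ≤ (x - w) ^ 2 + t := by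
        nlinarith [sq_nonneg (√t - |x - w|), sq_sqrt ht.le, sq_abs (x - w)]
      have : |x - w| / t ≤ 1 / (2 * t * √t) * (x - w) ^ 2 + 1 / (2 * √t) := calc
        |x - w| / t = 2 * √t * |x - w| / (2 * t * √t) := by field_simp
        _ ≤ ((x - w) ^ 2 + t) / (2 * t * √t) := by gcongr
        _ = 1 / (2 * t * √t) * (x - w) ^ 2 + 1 / (2 * √t) := by field_simp
      exact (mul_le_mul_of_nonneg_right this (heatKernel_nonneg t x w)).trans_eq (by ring)
  convert h using 2
  field_simp
  norm_num

theorem integral_abs_heatKernel_sub_le_two {s : ℝ} (ht : 0 < t) (hs : 0 < s) (y z : ℝ) :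
    ∫ x, |heatKernel t x y - heatKernel s x z| ≤ 2 := calc
  ∫ x, |heatKernel t x y - heatKernel s x z| ≤ ∫ x, (heatKernel t x y + heatKernel s x z) :=
    integral_mono ((integrable_heatKernel ht y).sub (integrable_heatKernel hs z)).abs
      ((integrable_heatKernel ht y).add (integrable_heatKernel hs z)) fun x =>
        abs_sub_le_iff.2
          ⟨by linarith [heatKernel_nonneg s x z], by linarith [heatKernel_nonneg t x y]⟩
  _ = 2 := by
    rw [integral_add (integrable_heatKernel ht y) (integrable_heatKernel hs z),
      integral_heatKernel ht, integral_heatKernel hs, one_add_one_eq_two]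

theorem integral_abs_heatKernel_sub_time_le {u v : ℝ} (hv : 0 < v) (hvu : v ≤ u) (y : ℝ) :
    ∫ x, |heatKernel u x y - heatKernel v x y| ≤ (u - v) / v := by
  have hcont : ∀ x, ContinuousOn
      (fun s => ((x - y) ^ 2 / (2 * s ^ 2) - 1 / (2 * s)) * heatKernel s x y) (Icc v u) := by
    intro x s hs
    have hs0 : s ≠ 0 := (hv.trans_le hs.1).ne'
    exact ((by fun_prop (disch := simp [hs0]) : ContinuousAt
      (fun s => (x - y) ^ 2 / (2 * s ^ 2) - 1 / (2 * s)) s).mul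
      (hasDerivAt_heatKernel_time (hv.trans_le hs.1) x y).continuousAt).continuousWithinAt
  have h := integral_abs_sub_le_of_hasDerivAt (f := fun s x => heatKernel s x y) hvu
    (by positivity : 0 ≤ 1 / v) (fun x s hs => hasDerivAt_heatKernel_time (hv.trans_le hs.1) x y)
    hcont (by fun_prop) fun s hs =>
      (lintegral_enorm_deriv_heatKernel_time_le (hv.trans hs.1) y).trans
        (ENNReal.ofReal_le_ofReal (one_div_le_one_div_of_le hv hs.1.le))
  rwa [one_div_mul_eq_div] at h

theorem integral_abs_heatKernel_sub_space_le (ht : 0 < t) (y z : ℝ) :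
    ∫ x, |heatKernel t x y - heatKernel t x z| ≤ |y - z| / √t := by
  wlog hzy : z ≤ y generalizing y z
  · simp_rw [abs_sub_comm (heatKernel t _ y), abs_sub_comm y]
    exact this z y (le_of_not_ge hzy)
  have h := integral_abs_sub_le_of_hasDerivAt (f := fun w x => heatKernel t x w) hzy
    (by positivity : 0 ≤ 1 / √t) (fun x w _ => hasDerivAt_heatKernel_space ht x w)
    (fun x w _ => (ContinuousAt.mul (by fun_prop)
      (hasDerivAt_heatKernel_space ht x w).continuousAt).continuousWithinAt)
    (by fun_prop) fun w _ => lintegral_enorm_deriv_heatKernel_space_le ht w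
  rwa [one_div_mul_eq_div, ← abs_of_nonneg (sub_nonneg.2 hzy)] at h

end

/-- There is a constant `C > 0` such that for all `0 < v < u` and all `y, z ∈ ℝ`,
`∫_ℝ |G(u,x,y) − G(v,x,z)| dx ≤ C (v^{-1/2} (u−v)^{1/2} + v^{-1/4} |y−z|^{1/2})`. -/
theorem heatKernel_L1_modulus :
    ∃ C > (0 : ℝ), ∀ v u : ℝ, 0 < v → v < u → ∀ y z : ℝ,
      (∫ x : ℝ, |heatKernel u x y - heatKernel v x z|) ≤
        C * (v ^ (-(1:ℝ)/2) * (u - v) ^ ((1:ℝ)/2) + v ^ (-(1:ℝ)/4) * |y - z| ^ ((1:ℝ)/2)) := by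
  refine ⟨√2, by positivity, fun v u hv hvu y z => ?_⟩
  have hu : 0 < u := hv.trans hvu
  have htime : ∫ x, |heatKernel u x y - heatKernel v x y| ≤ min 2 ((u - v) / v) :=
    le_min (integral_abs_heatKernel_sub_le_two hu hv y y)
      (integral_abs_heatKernel_sub_time_le hv hvu.le y)
  have hspace : ∫ x, |heatKernel v x y - heatKernel v x z| ≤ min 2 (|y - z| / √v) :=
    le_min (integral_abs_heatKernel_sub_le_two hv hv y z)
      (integral_abs_heatKernel_sub_space_le hv y z)
  have hsqrt_time : √((u - v) / v) = v ^ (-(1:ℝ)/2) * (u - v) ^ ((1:ℝ)/2) := by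
    rw [sqrt_eq_rpow, div_rpow (by linarith) hv.le, div_eq_inv_mul, ← rpow_neg hv.le]
    norm_num
  have hsqrt_space : √(|y - z| / √v) = v ^ (-(1:ℝ)/4) * |y - z| ^ ((1:ℝ)/2) := by
    rw [sqrt_eq_rpow, sqrt_eq_rpow, div_rpow (abs_nonneg _) (by positivity), ← rpow_mul hv.le,
      div_eq_inv_mul, ← rpow_neg hv.le]
    norm_num
  calc ∫ x, |heatKernel u x y - heatKernel v x z|
      ≤ (∫ x, |heatKernel u x y - heatKernel v x y|) +
          ∫ x, |heatKernel v x y - heatKernel v x z| :=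
        integral_norm_sub_le_add (integrable_heatKernel hu y) (integrable_heatKernel hv y)
          (integrable_heatKernel hv z)
    _ ≤ √(2 * ((u - v) / v)) + √(2 * (|y - z| / √v)) :=
        add_le_add (htime.trans (min_le_sqrt_mul (by norm_num) (div_nonneg (by linarith) hv.le)))
          (hspace.trans (min_le_sqrt_mul (by norm_num) (by positivity)))
    _ = √2 * (v ^ (-(1:ℝ)/2) * (u - v) ^ ((1:ℝ)/2) +
          v ^ (-(1:ℝ)/4) * |y - z| ^ ((1:ℝ)/2)) := by
        rw [sqrt_mul zero_le_two, sqrt_mul zero_le_two, hsqrt_time, hsqrt_space, mul_add]
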